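/- If α σ β in I^cf_λ, where σ is the least group congruence, then d̄(α) − r̄(α) = d̄(β) − r̄(β) in the integers. -/

import Mathlib

/-! The index `d̄ - r̄` is a monoid homomorphism `I^cf_λ → ℤ`: a point outside the domain of
`f * g` lies either outside the domain of `f`, or is sent by `f` to a point of `ran f` outside
the domain of `g`. Hence `α e = β e` forces `index α + index e = index β + index e`. -/

open Function Set

namespace IcfPaper

variable {ι : Type*}

lemma trans_none_finite {f g : ι ≃. ι}
    (hf : {a | f a = none}.Finite) (hg : {b | g b = none}.Finite) :
    {a | (f.trans g) a = none}.Finite := by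
  have hsub : {a | (f.trans g) a = none} ⊆
      {a | f a = none} ∪ ⋃ b ∈ {b | g b = none}, {a | f.symm b = some a} := by
    intro a ha
    simp only [Set.mem_setOf_eq] at ha
    rcases hfa : f a with _ | b
    · exact Or.inl hfa
    · have hg' : g b = none := by
        have : (f.trans g) a = (f a).bind g := rfl
        rw [this, hfa] at ha
        exact ha
      refine Or.inr ?_
      refine Set.mem_biUnion hg' ?_
      exact (PEquiv.eq_some_iff f).2 hfa
  refine Set.Finite.subset (hf.union (hg.biUnion ?_)) hsub
  intro b _
  apply Set.Subsingleton.finite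
  intro a1 h1 a2 h2
  simp only [Set.mem_setOf_eq] at h1 h2
  rw [h1] at h2
  exact Option.some_injective _ h2

/-- The monoid of injective partial selfmaps of `ι` with cofinite domain and range. -/
def Icf (ι : Type*) : Type _ :=
  {f : ι ≃. ι // {a | f a = none}.Finite ∧ {b | f.symm b = none}.Finite}

namespace Icf

instance : Monoid (Icf ι) where
  mul f g := ⟨f.1.trans g.1, trans_none_finite f.2.1 g.2.1, by
      rw [PEquiv.symm_trans_rev]
      exact trans_none_finite g.2.2 f.2.2⟩
  one := ⟨PEquiv.refl ι, by
      constructor <;>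
      · convert Set.finite_empty
        ext a
        simp only [Set.mem_setOf_eq, Set.mem_empty_iff_false, iff_false]
        intro h
        exact Option.some_ne_none _ h⟩
  mul_assoc a b c := Subtype.ext (PEquiv.trans_assoc _ _ _)
  one_mul a := Subtype.ext (PEquiv.refl_trans _)
  mul_one a := Subtype.ext (PEquiv.trans_refl _)

/-- The domain of an element of `Icf ι`. -/
def dom (f : Icf ι) : Set ι := {a | (f.1 a).isSome}

/-- The range of an element of `Icf ι`. -/
def ran (f : Icf ι) : Set ι := {b | (f.1.symm b).isSome}

/-- `d̄ f`, the number of points of `ι` outside of the domain of `f`. -/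
noncomputable def dbar (f : Icf ι) : ℕ := (dom f)ᶜ.ncard

/-- `r̄ f`, the number of points of `ι` outside of the range of `f`. -/
noncomputable def rbar (f : Icf ι) : ℕ := (ran f)ᶜ.ncard

end Icf

/-- The bicyclic semigroup `⟨p, q | pq = 1⟩`, realized as `ℕ × ℕ` with the operation
`(a,b)(c,d) = (a - b + max(b,c), d - c + max(b,c))`. -/
def Bicyclic : Type := ℕ × ℕ

instance : Mul Bicyclic :=
  ⟨fun x y => (x.1 - x.2 + max x.2 y.1, y.2 - y.1 + max x.2 y.1)⟩

section PartialEquiv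

variable {α β γ : Type*}

theorem _root_.PEquiv.setOf_trans_eq_none (f : α ≃. β) (g : β ≃. γ) :
    {a | f.trans g a = none} = {a | f a = none} ∪ {a | ∃ b, f a = some b ∧ g b = none} := by
  ext a
  rcases hfa : f a with _ | b <;> simp [PEquiv.trans, hfa]

theorem _root_.PEquiv.encard_setOf_eq_some_and (f : α ≃. β) (s : Set β) :
    {a | ∃ b, f a = some b ∧ b ∈ s}.encard = (s \ {b | f.symm b = none}).encard := by
  have hinj : InjOn f {a | ∃ b, f a = some b ∧ b ∈ s} := by
    rintro a₁ ⟨b, hb₁, -⟩ a₂ - h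
    exact f.inj (b := b) hb₁ (h ▸ hb₁)
  have himage : f '' {a | ∃ b, f a = some b ∧ b ∈ s} = some '' (s \ {b | f.symm b = none}) := by
    ext x
    simp only [mem_image, mem_ofPred_eq, mem_sdiff]
    constructor
    · rintro ⟨a, ⟨b, hab, hb⟩, rfl⟩
      exact ⟨b, ⟨hb, by simp [(f.eq_some_iff).2 hab]⟩, hab.symm⟩
    · rintro ⟨b, ⟨hb, hsb⟩, rfl⟩
      obtain ⟨a, ha⟩ := Option.ne_none_iff_exists'.1 hsb
      have hab := (f.eq_some_iff).1 ha
      exact ⟨a, ⟨b, hab, hb⟩, hab⟩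
  rw [← hinj.encard_image, himage, Option.some_injective _ |>.encard_image]

theorem _root_.PEquiv.encard_setOf_trans_eq_none (f : α ≃. β) (g : β ≃. γ) :
    {a | f.trans g a = none}.encard =
      {a | f a = none}.encard + ({b | g b = none} \ {b | f.symm b = none}).encard := by
  have hdisj : Disjoint {a | f a = none} {a | ∃ b, f a = some b ∧ g b = none} := by
    rw [disjoint_left]
    rintro a ha ⟨b, hab, -⟩
    simp_all
  rw [f.setOf_trans_eq_none, encard_union_eq hdisj, ← f.encard_setOf_eq_some_and]
  rfl

/-- Additivity of the index `|α ∖ dom| - |γ ∖ ran|`, in a subtraction-free form that holds for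
arbitrary cardinalities. -/
theorem _root_.PEquiv.encard_trans_eq_none_add_add (f : α ≃. β) (g : β ≃. γ) :
    {a | f.trans g a = none}.encard + {b | f.symm b = none}.encard + {c | g.symm c = none}.encard
      = {c | (f.trans g).symm c = none}.encard + {a | f a = none}.encard
        + {b | g b = none}.encard := by
  rw [PEquiv.symm_trans_rev, f.encard_setOf_trans_eq_none, g.symm.encard_setOf_trans_eq_none,
    PEquiv.symm_symm]
  set A := {a | f a = none}
  set B := {b | f.symm b = none}
  set C := {b | g b = none}
  set D := {c | g.symm c = none}
  calc A.encard + (C \ B).encard + B.encard + D.encard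
      = A.encard + ((C \ B).encard + B.encard) + D.encard := by ring
    _ = A.encard + ((B \ C).encard + C.encard) + D.encard := by
      rw [encard_sdiff_add_encard, encard_sdiff_add_encard, union_comm]
    _ = D.encard + (B \ C).encard + A.encard + C.encard := by ring

end PartialEquiv

namespace Icf

theorem dbar_eq_ncard (f : Icf ι) : dbar f = {a | f.1 a = none}.ncard := by
  simp [dbar, dom, compl_ofPred]

theorem rbar_eq_ncard (f : Icf ι) : rbar f = {b | f.1.symm b = none}.ncard := by
  simp [rbar, ran, compl_ofPred]

theorem dbar_mul_add_rbar_add_rbar (f g : Icf ι) :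
    dbar (f * g) + rbar f + rbar g = rbar (f * g) + dbar f + dbar g := by
  simp only [dbar_eq_ncard, rbar_eq_ncard]
  apply Nat.cast_injective (R := ℕ∞)
  push_cast
  rw [(f * g).2.1.cast_ncard_eq, (f * g).2.2.cast_ncard_eq, f.2.1.cast_ncard_eq,
    f.2.2.cast_ncard_eq, g.2.1.cast_ncard_eq, g.2.2.cast_ncard_eq]
  exact f.1.encard_trans_eq_none_add_add g.1

noncomputable def index (f : Icf ι) : ℤ := dbar f - rbar f

theorem index_mul (f g : Icf ι) : index (f * g) = index f + index g := by
  have := dbar_mul_add_rbar_add_rbar f g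
  simp only [index]
  omega

end Icf

theorem statement16_general {ι : Type*} (α β : Icf ι)
    (h : ∃ e : Icf ι, e * e = e ∧ α * e = β * e) :
    (Icf.dbar α : ℤ) - (Icf.rbar α : ℤ) = (Icf.dbar β : ℤ) - (Icf.rbar β : ℤ) := by
  obtain ⟨e, -, hαβ⟩ := h
  have hindex := congrArg Icf.index hαβ
  rw [Icf.index_mul, Icf.index_mul] at hindex
  exact add_right_cancel hindex

/-- If `α σ β` (with `σ` the least group congruence of the inverse semigroup `Icf ι`,
i.e. `α·e = β·e` for some idempotent `e`), then `d̄(α) − r̄(α) = d̄(β) − r̄(β)`. -/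
theorem statement16 {ι : Type*} [Infinite ι] (α β : Icf ι)
    (h : ∃ e : Icf ι, e * e = e ∧ α * e = β * e) :
    (Icf.dbar α : ℤ) - (Icf.rbar α : ℤ) = (Icf.dbar β : ℤ) - (Icf.rbar β : ℤ) :=
  statement16_general α β h

end IcfPaper
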